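/- Fix N ≥ 1 and 0 ≤ j ≤ ⌊N/2⌋. Let X_j be the set of involutions in Σ_N that are products of exactly j disjoint transpositions, and let V_j be the complex vector space with basis X_j. Define π_j(σ)(τ) = S(σ,τ) · στσ⁻¹ on basis elements, where S(σ,τ) = (−1)^{#{ {a,b} : a<b, τ(a)=b, σ(a)>σ(b) }}. Then π_j is a linear representation of Σ_N on V_j, i.e., π_j(σ′σ) = π_j(σ′) ∘ π_j(σ) and π_j(1) = id. -/

import Mathlib

open Equiv Finset

def Ssign {N : ℕ} (σ τ : Equiv.Perm (Fin N)) : ℤ :=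
  (-1) ^ (Finset.univ.filter (fun p : Fin N × Fin N =>
      p.1 < p.2 ∧ τ p.1 = p.2 ∧ σ p.2 < σ p.1)).card

/-- The set of involutions of Σ_N that are products of j disjoint transpositions. -/
def InvolJ (N j : ℕ) : Type := {τ : Equiv.Perm (Fin N) // τ * τ = 1 ∧ τ.support.card = 2 * j}

instance (N j : ℕ) : Fintype (InvolJ N j) := by unfold InvolJ; infer_instance
instance (N j : ℕ) : DecidableEq (InvolJ N j) := by unfold InvolJ; infer_instance

/-- Conjugation of an involution of length j by σ. -/
def involConj {N j : ℕ} (σ : Equiv.Perm (Fin N)) (τ : InvolJ N j) : InvolJ N j :=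
  ⟨σ * τ.1 * σ⁻¹,
   by rw [show σ * τ.1 * σ⁻¹ * (σ * τ.1 * σ⁻¹) = σ * (τ.1 * τ.1) * σ⁻¹ by group, τ.2.1]; simp,
   by rw [Equiv.Perm.support_conj]; simp [τ.2.2]⟩

/-- The representation π_j of Σ_N on the free vector space V_j with basis X_j,
given on basis vectors by π_j(σ)(τ) = S(σ,τ)·στσ⁻¹; here V_j is realized as the
space of ℂ-valued functions on X_j, with δ_τ as basis. -/
noncomputable def piRep (N j : ℕ) (σ : Equiv.Perm (Fin N)) :
    (InvolJ N j → ℂ) →ₗ[ℂ] (InvolJ N j → ℂ) where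
  toFun f := fun κ => (Ssign σ (involConj σ⁻¹ κ).1 : ℂ) * f (involConj σ⁻¹ κ)
  map_add' := by intro f g; funext κ; simp [mul_add]
  map_smul' := by intro c f; funext κ; simp; ring

/-- π_j(σ) sends the basis vector δ_τ to S(σ,τ)·δ_{στσ⁻¹}. -/
theorem piRep_single (N j : ℕ) (σ : Equiv.Perm (Fin N)) (τ : InvolJ N j) :
    piRep N j σ (Pi.single τ 1 : InvolJ N j → ℂ) =
      (Ssign σ τ.1 : ℂ) • (Pi.single (involConj σ τ) 1 : InvolJ N j → ℂ) := by
  have key : ∀ κ : InvolJ N j, involConj σ⁻¹ κ = τ ↔ κ = involConj σ τ := by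
    intro κ
    constructor <;> intro h
    · rw [← h]; apply Subtype.ext; simp [involConj, mul_assoc]
    · rw [h]; apply Subtype.ext; simp [involConj, mul_assoc]
  funext κ
  by_cases hκ : κ = involConj σ τ
  · subst hκ
    have h3 : involConj σ⁻¹ (involConj σ τ) = τ := (key _).2 rfl
    simp only [piRep, LinearMap.coe_mk, AddHom.coe_mk, Pi.smul_apply, smul_eq_mul,
      Pi.single_eq_same, mul_one]
    rw [h3, Pi.single_eq_same, mul_one]
  · have h2 : involConj σ⁻¹ κ ≠ τ := fun h => hκ ((key κ).1 h)
    simp [piRep, Pi.single_eq_of_ne hκ, Pi.single_eq_of_ne h2]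

lemma Ssign_eq_prod {N : ℕ} (σ τ : Equiv.Perm (Fin N)) :
    (Ssign σ τ : ℤ) =
      ∏ p ∈ Finset.univ.filter (fun p : Fin N × Fin N => p.1 < p.2 ∧ τ p.1 = p.2),
        (if σ p.2 < σ p.1 then (-1 : ℤ) else 1) := by
  rw [Finset.prod_ite, Finset.prod_const, Finset.prod_const, one_pow, mul_one,
    Finset.filter_filter, Ssign]
  congr 2
  ext p
  simp [and_assoc]

lemma Ssign_cocycle {N : ℕ} (σ σ' τ : Equiv.Perm (Fin N)) (hτ : τ * τ = 1) :
    Ssign (σ' * σ) τ = Ssign σ' (σ * τ * σ⁻¹) * Ssign σ τ := by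
  have hinv : ∀ x, τ (τ x) = x := by
    intro x
    have := congrArg (fun f => f x) hτ
    simpa [Equiv.Perm.mul_apply] using this
  rw [Ssign_eq_prod, Ssign_eq_prod, Ssign_eq_prod]
  set g : Fin N × Fin N → Fin N × Fin N := fun p =>
    if σ p.1 < σ p.2 then (σ p.1, σ p.2) else (σ p.2, σ p.1) with hg
  have step : ∀ p ∈ Finset.univ.filter (fun p : Fin N × Fin N => p.1 < p.2 ∧ τ p.1 = p.2),
      (if (σ' * σ) p.2 < (σ' * σ) p.1 then (-1 : ℤ) else 1) =
      (if σ' (g p).2 < σ' (g p).1 then (-1 : ℤ) else 1) *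
        (if σ p.2 < σ p.1 then (-1 : ℤ) else 1) := by
    intro p hp
    simp only [Finset.mem_filter, Finset.mem_univ, true_and] at hp
    obtain ⟨h1, _⟩ := hp
    have hne : σ p.1 ≠ σ p.2 := fun he => h1.ne (σ.injective he)
    have hne2 : σ' (σ p.1) ≠ σ' (σ p.2) := fun he => hne (σ'.injective he)
    simp only [hg, Equiv.Perm.mul_apply]
    rcases hne.lt_or_gt with h | h
    · rw [if_pos h]
      simp only
      rw [if_neg (asymm h), mul_one]
      rfl
    · rw [if_neg (asymm h), if_pos h]
      simp only
      rcases hne2.lt_or_gt with h' | h'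
      · simp only [if_neg (asymm h'), if_pos h']
        exact if_neg (asymm h')
      · simp only [if_pos h', if_neg (asymm h')]
        exact if_pos h'
  rw [Finset.prod_congr rfl step, Finset.prod_mul_distrib]
  congr 1
  set ginv : Fin N × Fin N → Fin N × Fin N := fun q =>
    if σ⁻¹ q.1 < σ⁻¹ q.2 then (σ⁻¹ q.1, σ⁻¹ q.2) else (σ⁻¹ q.2, σ⁻¹ q.1) with hginv
  have hright : ∀ q : Fin N × Fin N, q.1 < q.2 → g (ginv q) = q := by
    intro q h1
    clear step
    simp only [hg, hginv]
    split_ifs with h h' h' <;>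
      simp_all [Equiv.apply_symm_apply] <;>
      exact absurd h' (asymm h1)
  refine Finset.prod_nbij' (i := g) (j := ginv) ?_ ?_ ?_ ?_ ?_
  · intro p hp
    simp only [Finset.mem_filter, Finset.mem_univ, true_and] at hp ⊢
    obtain ⟨h1, h2⟩ := hp
    have h3 : τ p.2 = p.1 := by rw [← h2, hinv]
    simp only [hg]
    split_ifs with h
    · exact ⟨h, by simp [Equiv.Perm.mul_apply, h2]⟩
    · have hne : σ p.1 ≠ σ p.2 := fun he => h1.ne (σ.injective he)
      exact ⟨lt_of_le_of_ne (not_lt.1 h) hne.symm,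
        by simp [Equiv.Perm.mul_apply, h3]⟩
  · intro q hq
    simp only [Finset.mem_filter, Finset.mem_univ, true_and] at hq ⊢
    obtain ⟨h1, h2⟩ := hq
    have h2' : τ (σ⁻¹ q.1) = σ⁻¹ q.2 := by
      rw [← h2]; simp [Equiv.Perm.mul_apply]
    have h3' : τ (σ⁻¹ q.2) = σ⁻¹ q.1 := by rw [← h2', hinv]
    simp only [hginv]
    split_ifs with h
    · exact ⟨h, h2'⟩
    · have hne : σ⁻¹ q.1 ≠ σ⁻¹ q.2 := fun he => h1.ne (σ⁻¹.injective he)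
      exact ⟨lt_of_le_of_ne (not_lt.1 h) hne.symm, h3'⟩
  · intro p hp
    simp only [Finset.mem_filter, Finset.mem_univ, true_and] at hp
    obtain ⟨h1, _⟩ := hp
    clear step hright
    simp only [hg, hginv]
    split_ifs with h h' h' <;>
      simp_all [Equiv.symm_apply_apply] <;>
      exact absurd h' (asymm h1)
  · intro q hq
    simp only [Finset.mem_filter, Finset.mem_univ, true_and] at hq
    exact hright q hq.1
  · intro p _
    rfl

lemma involConj_comp {N j : ℕ} (σ σ' : Equiv.Perm (Fin N)) (κ : InvolJ N j) :
    involConj σ⁻¹ (involConj σ'⁻¹ κ) = involConj (σ' * σ)⁻¹ κ := by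
  apply Subtype.ext
  simp [involConj, mul_assoc]

lemma involConj_back {N j : ℕ} (σ σ' : Equiv.Perm (Fin N)) (κ : InvolJ N j) :
    (involConj σ'⁻¹ κ).1 = σ * (involConj (σ' * σ)⁻¹ κ).1 * σ⁻¹ := by
  simp [involConj, mul_assoc]

/-- π_j is a linear representation of Σ_N on V_j:
π_j(σ'σ) = π_j(σ') ∘ π_j(σ) and π_j(1) = id. -/
theorem piRep_is_representation (N j : ℕ) (hj : j ≤ N / 2) :
    (∀ σ σ' : Equiv.Perm (Fin N), piRep N j (σ' * σ) = (piRep N j σ') ∘ₗ (piRep N j σ)) ∧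
    piRep N j (1 : Equiv.Perm (Fin N)) = LinearMap.id := by
  constructor
  · intro σ σ'
    apply LinearMap.ext
    intro f
    funext κ
    simp only [piRep, LinearMap.coe_mk, AddHom.coe_mk, LinearMap.comp_apply]
    rw [involConj_comp]
    set τ := involConj (σ' * σ)⁻¹ κ with hτdef
    have hback : (involConj σ'⁻¹ κ).1 = σ * τ.1 * σ⁻¹ := involConj_back σ σ' κ
    rw [hback, Ssign_cocycle σ σ' τ.1 τ.2.1]
    push_cast
    ring
  · apply LinearMap.ext
    intro f
    funext κ
    have h1 : involConj (1 : Equiv.Perm (Fin N)) κ = κ := by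
      apply Subtype.ext; simp [involConj]
    have h2 : Ssign (1 : Equiv.Perm (Fin N)) κ.1 = 1 := by
      rw [Ssign]
      convert pow_zero (-1 : ℤ)
      rw [Finset.card_eq_zero, Finset.filter_eq_empty_iff]
      intro p _
      simp only [Equiv.Perm.one_apply]
      rintro ⟨h, -, h'⟩
      exact absurd h' (not_lt.2 h.le)
    simp [piRep, h1, h2]
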